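/- arXiv:2508.05126 — 10 statements merged into one kernel-verified Lean document; each statement's English description precedes it below -/
import Mathlib

section
/- Fix t ∈ ℂ∖{0,1}. For (q₁,q₂,p₂) ∈ ℂ³ define F̃₁ := (q₁−1)·(2q₁(q₁−t) + (q₁+q₂)(q₂−t)p₂), F̃₂ := (q₂−t)·((q₁−1)(q₁+q₂) + 2q₂(q₂−1)p₂), and G̃₂ := ((2q₁²−2q₁q₂−(t+1)q₁+2q₂) + (2q₁q₂−2q₂²−2tq₁+(t+1)q₂)·p₂)·p₂. Then F̃₁ = 0, F̃₂ = 0 and G̃₂ = 0 hold simultaneously if and only if (q₁,q₂,p₂) lies in the union of the following ten sets: {q₁ = q₂ and p₂ = −1}; {q₁ = 1 and p₂ = 0}; {q₁ = 0 and q₂ = 0}; {q₁ = t, q₂ = t, p₂ = 0}; {q₁ = t, q₂ = −t, p₂ = 0}; {q₁ = 0, q₂ = t, p₂ = 0}; {q₁ = 0, q₂ = t, (t−1)p₂ − 2 = 0}; {q₁ = 1, q₂ = 0, 2t·p₂ + t − 1 = 0}; {q₁ = 1, q₂ = t, t·p₂ + 1 = 0}; {q₁ = −1, q₂ = −t, t·p₂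 + 1 = 0}. -/
/-- Determination of the accessible singularities of the fourth-order FST Painlevé
system in the affine chart `W₀₁`: the common zero locus of `F̃₁`, `F̃₂`, `G̃₂` is the
union of ten explicit sets. Here `p₂` denotes the coordinate `p₂^{(01)}`. -/
theorem accessible_singularities_W01 (t : ℂ) (ht0 : t ≠ 0) (ht1 : t ≠ 1)
    (q₁ q₂ p₂ : ℂ) :
    ((q₁ - 1) * (2 * q₁ * (q₁ - t) + (q₁ + q₂) * (q₂ - t) * p₂) = 0 ∧
     (q₂ - t) * ((q₁ - 1) * (q₁ + q₂) + 2 * q₂ * (q₂ - 1) * p₂) = 0 ∧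
     ((2 * q₁ ^ 2 - 2 * q₁ * q₂ - (t + 1) * q₁ + 2 * q₂) +
       (2 * q₁ * q₂ - 2 * q₂ ^ 2 - 2 * t * q₁ + (t + 1) * q₂) * p₂) * p₂ = 0) ↔
    ((q₁ = q₂ ∧ p₂ = -1) ∨
     (q₁ = 1 ∧ p₂ = 0) ∨
     (q₁ = 0 ∧ q₂ = 0) ∨
     (q₁ = t ∧ q₂ = t ∧ p₂ = 0) ∨
     (q₁ = t ∧ q₂ = -t ∧ p₂ = 0) ∨
     (q₁ = 0 ∧ q₂ = t ∧ p₂ = 0) ∨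
     (q₁ = 0 ∧ q₂ = t ∧ (t - 1) * p₂ - 2 = 0) ∨
     (q₁ = 1 ∧ q₂ = 0 ∧ 2 * t * p₂ + t - 1 = 0) ∨
     (q₁ = 1 ∧ q₂ = t ∧ t * p₂ + 1 = 0) ∨
     (q₁ = -1 ∧ q₂ = -t ∧ t * p₂ + 1 = 0)) := by
  have ht1' : (1 : ℂ) - t ≠ 0 := sub_ne_zero.mpr (Ne.symm ht1)
  constructor
  · rintro ⟨h1, h2, h3⟩
    by_cases hp : p₂ = 0
    · -- p₂ = 0
      subst hp
      have h1' : (q₁ - 1) * q₁ * (q₁ - t) = 0 := by linear_combination h1 / 2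
      rcases mul_eq_zero.mp h1' with h | hq1t
      · rcases mul_eq_zero.mp h with hq11 | hq10
        · exact Or.inr (Or.inl ⟨sub_eq_zero.mp hq11, rfl⟩)
        · subst hq10
          have h2' : (q₂ - t) * q₂ = 0 := by linear_combination -h2
          rcases mul_eq_zero.mp h2' with h | h
          · exact Or.inr (Or.inr (Or.inr (Or.inr (Or.inr (Or.inl
              ⟨rfl, sub_eq_zero.mp h, rfl⟩)))))
          · exact Or.inr (Or.inr (Or.inl ⟨rfl, h⟩))
      · have e1 : q₁ = t := sub_eq_zero.mp hq1t
        rw [e1] at h2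
        have h2' : (q₂ - t) * ((t - 1) * (t + q₂)) = 0 := by linear_combination h2
        rcases mul_eq_zero.mp h2' with h | h
        · exact Or.inr (Or.inr (Or.inr (Or.inl ⟨e1, sub_eq_zero.mp h, rfl⟩)))
        · rcases mul_eq_zero.mp h with h | h
          · exact absurd (by linear_combination -h) ht1'
          · exact Or.inr (Or.inr (Or.inr (Or.inr (Or.inl
              ⟨e1, by linear_combination h, rfl⟩))))
    · -- p₂ ≠ 0
      have hE3 : (2 * q₁ ^ 2 - 2 * q₁ * q₂ - (t + 1) * q₁ + 2 * q₂) +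
          (2 * q₁ * q₂ - 2 * q₂ ^ 2 - 2 * t * q₁ + (t + 1) * q₂) * p₂ = 0 :=
        (mul_eq_zero.mp h3).resolve_right hp
      rcases mul_eq_zero.mp h1 with hq11 | hE1
      · -- q₁ = 1
        have hq1 : q₁ = 1 := sub_eq_zero.mp hq11
        subst hq1
        rcases mul_eq_zero.mp h2 with hq2t | hE2
        · -- q₂ = t
          have e2 : q₂ = t := sub_eq_zero.mp hq2t
          rw [e2] at hE3
          have h' : (1 - t) * (1 + t * p₂) = 0 := by linear_combination hE3
          rcases mul_eq_zero.mp h' with h | h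
          · exact absurd h ht1'
          · exact Or.inr (Or.inr (Or.inr (Or.inr (Or.inr (Or.inr (Or.inr (Or.inr
              (Or.inl ⟨rfl, e2, by linear_combination h⟩))))))))
        · -- 2 q₂ (q₂ - 1) p₂ = 0
          have h' : q₂ * (q₂ - 1) * p₂ = 0 := by linear_combination hE2 / 2
          rcases mul_eq_zero.mp h' with h | h
          · rcases mul_eq_zero.mp h with h | h
            · subst h
              exact Or.inr (Or.inr (Or.inr (Or.inr (Or.inr (Or.inr (Or.inr
                (Or.inl ⟨rfl, rfl, by linear_combination -hE3⟩)))))))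
            · have hq2 : q₂ = 1 := sub_eq_zero.mp h
              subst hq2
              have h'' : (1 - t) * (1 + p₂) = 0 := by linear_combination hE3
              rcases mul_eq_zero.mp h'' with h | h
              · exact absurd h ht1'
              · exact Or.inl ⟨rfl, by linear_combination h⟩
          · exact absurd h hp
      · -- E1 = 0
        rcases mul_eq_zero.mp h2 with hq2t | hE2
        · -- q₂ = t
          have e2 : q₂ = t := sub_eq_zero.mp hq2t
          rw [e2] at hE1 hE3
          have h' : q₁ * (q₁ - t) = 0 := by linear_combination hE1 / 2
          rcases mul_eq_zero.mp h' with h | h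
          · subst h
            have h'' : t * (2 - (t - 1) * p₂) = 0 := by linear_combination hE3
            rcases mul_eq_zero.mp h'' with h | h
            · exact absurd h ht0
            · exact Or.inr (Or.inr (Or.inr (Or.inr (Or.inr (Or.inr (Or.inl
                ⟨rfl, e2, by linear_combination -h⟩))))))
          · have e1 : q₁ = t := sub_eq_zero.mp h
            rw [e1] at hE3
            have h'' : (1 - t) * (t * (1 + p₂)) = 0 := by linear_combination hE3
            rcases mul_eq_zero.mp h'' with h | h
            · exact absurd h ht1'
            · rcases mul_eq_zero.mp h with h | h
              · exact absurd h ht0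
              · exact Or.inl ⟨by rw [e1, e2], by linear_combination h⟩
        · -- generic case: E1 = E2 = E3 = 0
          have key : (1 - t) * (q₁ + q₂ * p₂) = 0 := by
            linear_combination (2 * hE1 - 2 * hE2 - hE3) / 3
          have ha : q₁ + q₂ * p₂ = 0 := (mul_eq_zero.mp key).resolve_left ht1'
          have h1'' : q₂ * p₂ * (q₂ + t) * (1 + p₂) = 0 := by
            linear_combination hE1 - (2 * q₁ - 2 * t - q₂ * p₂ - t * p₂) * ha
          have h2'' : q₂ * (p₂ + 1) * (q₂ * p₂ - 1) = 0 := by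
            linear_combination hE2 - (q₁ + q₂ - q₂ * p₂ - 1) * ha
          rcases mul_eq_zero.mp h1'' with h | hu
          · rcases mul_eq_zero.mp h with h | h
            · rcases mul_eq_zero.mp h with h | h
              · subst h
                exact Or.inr (Or.inr (Or.inl ⟨by linear_combination ha, rfl⟩))
              · exact absurd h hp
            · -- q₂ = -t
              have hq2 : q₂ = -t := by linear_combination h
              rw [hq2] at h2'' ha
              have h2''' : t * ((p₂ + 1) * (t * p₂ + 1)) = 0 := by
                linear_combination h2''
              rcases mul_eq_zero.mp h2''' with h' | h'
              · exact absurd h' ht0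
              · rcases mul_eq_zero.mp h' with h' | h'
                · exact Or.inl ⟨by rw [hq2]; linear_combination ha + t * h',
                    by linear_combination h'⟩
                · exact Or.inr (Or.inr (Or.inr (Or.inr (Or.inr (Or.inr (Or.inr
                    (Or.inr (Or.inr ⟨by linear_combination ha + h', hq2, h'⟩))))))))
          · -- p₂ = -1
            have hpm : p₂ = -1 := by linear_combination hu
            exact Or.inl ⟨by linear_combination ha - q₂ * hpm, hpm⟩
  · rintro (⟨h, hp⟩ | ⟨h, hp⟩ | ⟨h, h'⟩ | ⟨h, h', hp⟩ | ⟨h, h', hp⟩ | ⟨h, h', hp⟩ |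
      ⟨h, h', hp⟩ | ⟨h, h', hp⟩ | ⟨h, h', hp⟩ | ⟨h, h', hp⟩)
    · subst h hp; exact ⟨by ring, by ring, by ring⟩
    · subst h hp; exact ⟨by ring, by ring, by ring⟩
    · subst h h'; exact ⟨by ring, by ring, by ring⟩
    · subst h h' hp; exact ⟨by ring, by ring, by ring⟩
    · subst h h' hp; exact ⟨by ring, by ring, by ring⟩
    · subst h h' hp; exact ⟨by ring, by ring, by ring⟩
    · subst h h'
      exact ⟨by ring, by ring, by linear_combination (-q₂ * p₂) * hp⟩
    · subst h h'
      exact ⟨by ring, by ring, by linear_combination (-p₂) * hp⟩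
    · subst h h'
      exact ⟨by ring, by ring, by linear_combination ((1 - q₂) * p₂) * hp⟩
    · subst h h'
      exact ⟨by linear_combination (-4 * (1 + t)) * hp,
        by linear_combination (-4 * t * (1 + t)) * hp,
        by linear_combination (3 * (1 - t) * p₂) * hp⟩
end

section
/- Fix t ∈ ℂ∖{0,1}. For (q₂,p₂) ∈ ℂ², the two equations q₂(q₂−1)(q₂−t)·p₂ = 0 and (t−1 + (2q₂²−(t+3)q₂+2t)·p₂)·p₂ = 0 hold simultaneously if and only if p₂ = 0, or (q₂,p₂) = (0, (1−t)/(2t)), or (q₂,p₂) = (1, −1), or (q₂,p₂) = (t, −1/t). -/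
-- `x ≠ 0` covers `b = 0`, where the junk value `-a / 0 = 0` would make the right side `x = 0`.
theorem add_mul_eq_zero_iff_eq_neg_div {K : Type*} [Field K] {a b x : K} (ha : a ≠ 0)
    (hx : x ≠ 0) : a + b * x = 0 ↔ x = -a / b := by
  rcases eq_or_ne b 0 with rfl | hb
  · simp [ha, hx]
  · rw [eq_div_iff hb]
    constructor <;> intro h <;> linear_combination h

theorem accessible_singularities_W01_case_q1_eq_one_general (t : ℂ) (ht1 : t ≠ 1)
    (q₂ p₂ : ℂ) :
    (q₂ * (q₂ - 1) * (q₂ - t) * p₂ = 0 ∧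
     (t - 1 + (2 * q₂ ^ 2 - (t + 3) * q₂ + 2 * t) * p₂) * p₂ = 0) ↔
    (p₂ = 0 ∨
     (q₂ = 0 ∧ p₂ = (1 - t) / (2 * t)) ∨
     (q₂ = 1 ∧ p₂ = -1) ∨
     (q₂ = t ∧ p₂ = -1 / t)) := by
  have ht : t - 1 ≠ 0 := sub_ne_zero.mpr ht1
  rcases eq_or_ne p₂ 0 with rfl | hp
  · simp
  have hroots : q₂ * (q₂ - 1) * (q₂ - t) = 0 ↔ q₂ = 0 ∨ q₂ = 1 ∨ q₂ = t := by
    simp only [mul_eq_zero, sub_eq_zero, or_assoc]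
  simp only [mul_eq_zero (b := p₂), hp, or_false, false_or, hroots, or_and_right]
  refine or_congr ?_ (or_congr ?_ ?_) <;> refine and_congr_right fun hq => ?_ <;>
    rw [hq, add_mul_eq_zero_iff_eq_neg_div ht hp]
  · rw [show 2 * (0 : ℂ) ^ 2 - (t + 3) * 0 + 2 * t = 2 * t by ring, neg_sub]
  · rw [show 2 * (1 : ℂ) ^ 2 - (t + 3) * 1 + 2 * t = t - 1 by ring, neg_div, div_self ht]
  · rw [show 2 * t ^ 2 - (t + 3) * t + 2 * t = t * (t - 1) by ring, neg_div,
      div_mul_cancel_right₀ ht, neg_div, one_div]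

/-- The case `q₁ = 1` of the determination of the accessible singularities of the
fourth-order FST Painlevé system in the chart `W₀₁`. -/
theorem accessible_singularities_W01_case_q1_eq_one (t : ℂ) (ht0 : t ≠ 0) (ht1 : t ≠ 1)
    (q₂ p₂ : ℂ) :
    (q₂ * (q₂ - 1) * (q₂ - t) * p₂ = 0 ∧
     (t - 1 + (2 * q₂ ^ 2 - (t + 3) * q₂ + 2 * t) * p₂) * p₂ = 0) ↔
    (p₂ = 0 ∨
     (q₂ = 0 ∧ p₂ = (1 - t) / (2 * t)) ∨
     (q₂ = 1 ∧ p₂ = -1) ∨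
     (q₂ = t ∧ p₂ = -1 / t)) :=
  accessible_singularities_W01_case_q1_eq_one_general t ht1 q₂ p₂
end

section
/- Fix t ∈ ℂ∖{0,1}. Let (q₁,q₂,p₂) ∈ ℂ³ satisfy q₁ ≠ 1, q₂ ≠ t and p₂ ≠ 0. Then the three equations 2q₁(q₁−t) + (q₁+q₂)(q₂−t)p₂ = 0, (q₁−1)(q₁+q₂) + 2q₂(q₂−1)p₂ = 0, and (2q₁²−2q₁q₂−(t+1)q₁+2q₂) + (2q₁q₂−2q₂²−2tq₁+(t+1)q₂)p₂ = 0 hold simultaneously if and only if: q₁ = 0 and q₂ = 0; or q₁ = q₂ and p₂ = −1; or (q₁,q₂,p₂) = (−1, −t, −1/t). -/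
/-- The case `q₁ ≠ 1`, `q₂ ≠ t`, `p₂ ≠ 0` of the determination of the accessible
singularities of the fourth-order FST Painlevé system in the chart `W₀₁`. -/
theorem accessible_singularities_W01_generic_case (t : ℂ) (ht0 : t ≠ 0) (ht1 : t ≠ 1)
    (q₁ q₂ p₂ : ℂ) (hq₁ : q₁ ≠ 1) (hq₂ : q₂ ≠ t) (hp₂ : p₂ ≠ 0) :
    (2 * q₁ * (q₁ - t) + (q₁ + q₂) * (q₂ - t) * p₂ = 0 ∧
     (q₁ - 1) * (q₁ + q₂) + 2 * q₂ * (q₂ - 1) * p₂ = 0 ∧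
     (2 * q₁ ^ 2 - 2 * q₁ * q₂ - (t + 1) * q₁ + 2 * q₂) +
       (2 * q₁ * q₂ - 2 * q₂ ^ 2 - 2 * t * q₁ + (t + 1) * q₂) * p₂ = 0) ↔
    ((q₁ = 0 ∧ q₂ = 0) ∨
     (q₁ = q₂ ∧ p₂ = -1) ∨
     (q₁ = -1 ∧ q₂ = -t ∧ p₂ = -1 / t)) := by
  constructor
  · rintro ⟨h1, h2, h3⟩
    by_cases hqq : q₁ = q₂
    · subst hqq
      have h : q₁ * ((q₁ - 1) * (1 + p₂)) = 0 := by linear_combination h2 / 2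
      rcases mul_eq_zero.mp h with h0 | h'
      · exact Or.inl ⟨h0, h0⟩
      · rcases mul_eq_zero.mp h' with h0 | h0
        · exact absurd (by linear_combination h0) hq₁
        · exact Or.inr (Or.inl ⟨rfl, by linear_combination h0⟩)
    · have hne : q₁ - q₂ ≠ 0 := sub_ne_zero.mpr hqq
      have ht1' : (1 : ℂ) - t ≠ 0 := sub_ne_zero.mpr (Ne.symm ht1)
      have ht1'' : t - (1 : ℂ) ≠ 0 := sub_ne_zero.mpr ht1
      have h4 : (q₁ - q₂) * ((1 - t) * (q₂ - t * q₁)) = 0 := by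
        linear_combination ((2*q₁*q₂ - 2*q₂^2 - 2*t*q₁ + (t+1)*q₂)/3) * h1
          - ((2*q₁*q₂ - 2*q₂^2 - 2*t*q₁ + (t+1)*q₂)/3) * h2
          + ((2*q₂*(q₂-1) - (q₁+q₂)*(q₂-t))/3) * h3
      have h5 : (q₁ - q₂) * ((t - 1) * (q₁ * (t + q₂))) = 0 := by
        linear_combination ((4*q₂*(q₂-1) + 2*q₁*q₂ - 2*q₂^2 - 2*t*q₁ + (t+1)*q₂)/3) * h1
          - (2*(q₁+q₂)*(q₂-t)/3) * h2 - ((q₁+q₂)*(q₂-t)/3) * h3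
      have h4' : q₂ = t * q₁ :=
        sub_eq_zero.mp (((mul_eq_zero.mp h4).resolve_left hne |>
          mul_eq_zero.mp).resolve_left ht1')
      have h5' : q₁ * (t + q₂) = 0 :=
        ((mul_eq_zero.mp h5).resolve_left hne |> mul_eq_zero.mp).resolve_left ht1''
      rcases mul_eq_zero.mp h5' with h0 | h0
      · exact absurd (by rw [h4', h0, mul_zero]) hqq
      · have hq2 : q₂ = -t := by linear_combination h0
        have hq1 : q₁ = -1 := by
          have : t * q₁ = t * (-1) := by rw [← h4', hq2]; ring
          exact mul_left_cancel₀ ht0 this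
        refine Or.inr (Or.inr ⟨hq1, hq2, ?_⟩)
        have hp : (1 - t) * (1 + t * p₂) = 0 := by
          rw [hq1, hq2] at h3; linear_combination h3 / 3
        have : 1 + t * p₂ = 0 := (mul_eq_zero.mp hp).resolve_left ht1'
        field_simp
        linear_combination this
  · rintro (⟨h1, h2⟩ | ⟨h1, h2⟩ | ⟨h1, h2, h3⟩)
    · subst h1; subst h2; refine ⟨by ring, by ring, by ring⟩
    · subst h1; subst h2; refine ⟨by ring, by ring, by ring⟩
    · subst h1; subst h2; subst h3
      refine ⟨?_, ?_, ?_⟩ <;> field_simp <;> ring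
end

section
/- Fix η ∈ ℂ. Define φ₁ : {(q₁,q₂,p₁,p₂) ∈ ℂ⁴ : q₁ ≠ 0} → ℂ⁴ by φ₁(q₁,q₂,p₁,p₂) = (1/q₁, q₂/q₁, −q₁(q₁p₁+q₂p₂+η), q₁p₂). Let Ω be the 4×4 complex matrix with entries Ω₁₃ = Ω₂₄ = 1, Ω₃₁ = Ω₄₂ = −1 and all other entries 0. Then φ₁ is a symplectic transformation: at every point v of its domain, φ₁ is complex-differentiable and the 4×4 matrix J of its derivative (with respect to the standard coordinates, ordered (q₁,q₂,p₁,p₂) in the source and as the four listed components in the target) satisfies Jᵀ·Ω·J = Ω. -/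
/-!
`φ₁` is the cotangent lift of the projective change of base coordinates
`(q₁, q₂) ↦ (1/q₁, q₂/q₁)`, followed by the shift of `P₁` by the closed form `-η dQ₁/Q₁`.
Accordingly its Jacobian is block lower triangular, `J = [[A, 0], [C, A⁻ᵀ]]` with `AᵀC`
symmetric, and these two facts are exactly the entries of `JᵀΩJ = Ω`.
-/

open Matrix

theorem hasFDerivAt_toContinuousLinearMap_mulVecLin_iff {𝕜 : Type*} [NontriviallyNormedField 𝕜]
    [CompleteSpace 𝕜] {m n : Type*} [Fintype m] [Fintype n] {f : (n → 𝕜) → m → 𝕜}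
    {J : Matrix m n 𝕜} {v : n → 𝕜} :
    HasFDerivAt f (LinearMap.toContinuousLinearMap J.mulVecLin) v ↔
      ∀ i, HasFDerivAt (fun w => f w i)
        (∑ j, J i j • (ContinuousLinearMap.proj j : (n → 𝕜) →L[𝕜] 𝕜)) v := by
  rw [hasFDerivAt_pi']
  refine forall_congr' fun i => iff_of_eq (congrArg (HasFDerivAt _ · v) ?_)
  ext u
  simp [mulVec, dotProduct]

def canonicalSymplecticMatrix (R : Type*) [Ring R] : Matrix (Fin 4) (Fin 4) R :=
  !![0, 0, 1, 0; 0, 0, 0, 1; -1, 0, 0, 0; 0, -1, 0, 0]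

noncomputable def phi1 (η : ℂ) (w : Fin 4 → ℂ) : Fin 4 → ℂ :=
  ![1 / w 0, w 1 / w 0, -w 0 * (w 0 * w 2 + w 1 * w 3 + η), w 0 * w 3]

noncomputable def phi1Jacobian (η : ℂ) (v : Fin 4 → ℂ) : Matrix (Fin 4) (Fin 4) ℂ :=
  !![-1 / v 0 ^ 2, 0, 0, 0;
     -v 1 / v 0 ^ 2, 1 / v 0, 0, 0;
     -(2 * v 0 * v 2 + v 1 * v 3 + η), -v 0 * v 3, -v 0 ^ 2, -v 0 * v 1;
     v 3, 0, 0, v 0]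

theorem hasFDerivAt_phi1 (η : ℂ) {v : Fin 4 → ℂ} (hv : v 0 ≠ 0) :
    HasFDerivAt (phi1 η) (LinearMap.toContinuousLinearMap (phi1Jacobian η v).mulVecLin) v := by
  have hcoord (j : Fin 4) := hasFDerivAt_apply (𝕜 := ℂ) j v
  have hinv := (hasDerivAt_inv hv).comp_hasFDerivAt v (hcoord 0)
  rw [hasFDerivAt_toContinuousLinearMap_mulVecLin_iff]
  intro i
  fin_cases i <;> simp only [phi1, phi1Jacobian, Fin.sum_univ_four, div_eq_mul_inv, one_mul]
  · exact hinv.congr_fderiv (by ext; simp)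
  · exact ((hcoord 1).mul hinv).congr_fderiv (by ext; simp; ring)
  · exact ((hcoord 0).neg.mul ((((hcoord 0).mul (hcoord 2)).add
      ((hcoord 1).mul (hcoord 3))).add_const η)).congr_fderiv (by ext; simp; ring)
  · exact ((hcoord 0).mul (hcoord 3)).congr_fderiv (by ext; simp; ring)

theorem phi1Jacobian_transpose_mul_canonicalSymplecticMatrix_mul (η : ℂ) {v : Fin 4 → ℂ}
    (hv : v 0 ≠ 0) :
    (phi1Jacobian η v)ᵀ * canonicalSymplecticMatrix ℂ * phi1Jacobian η v =
      canonicalSymplecticMatrix ℂ := by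
  ext i j
  fin_cases i <;> fin_cases j <;>
    simp [phi1Jacobian, canonicalSymplecticMatrix, mul_apply, Fin.sum_univ_four] <;>
    field_simp <;> ring

/-- The coordinate change `φ₁` from the chart `W₀₀` to the chart `W₁₀` of the
compactified phase space of the fourth-order FST Painlevé system,
`φ₁(q₁,q₂,p₁,p₂) = (1/q₁, q₂/q₁, −q₁(q₁p₁+q₂p₂+η), q₁p₂)`, is a symplectic
transformation: at every point of its domain `{q₁ ≠ 0}` it is complex-differentiable
and its Jacobian matrix `J` satisfies `Jᵀ Ω J = Ω`, where `Ω` is the matrix of the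
canonical symplectic form (coordinates ordered `(q₁,q₂,p₁,p₂)`). -/
theorem phi1_symplectic (η : ℂ) (v : Fin 4 → ℂ) (hv : v 0 ≠ 0) :
    ∃ J : Matrix (Fin 4) (Fin 4) ℂ,
      HasFDerivAt
        (fun w : Fin 4 → ℂ =>
          (![1 / w 0, w 1 / w 0, -w 0 * (w 0 * w 2 + w 1 * w 3 + η), w 0 * w 3] :
            Fin 4 → ℂ))
        (LinearMap.toContinuousLinearMap (Matrix.mulVecLin J)) v ∧
      J.transpose * (!![0, 0, 1, 0; 0, 0, 0, 1; -1, 0, 0, 0; 0, -1, 0, 0] :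
          Matrix (Fin 4) (Fin 4) ℂ) * J =
        !![0, 0, 1, 0; 0, 0, 0, 1; -1, 0, 0, 0; 0, -1, 0, 0] :=
  ⟨phi1Jacobian η v, hasFDerivAt_phi1 η hv,
    phi1Jacobian_transpose_mul_canonicalSymplecticMatrix_mul η hv⟩
end

section
/- Fix α₀ ∈ ℂ. Define Φ₀ : {(q₁,q₂,p₁,p₂) ∈ ℂ⁴ : p₁ ≠ 0} → ℂ⁴ by Φ₀(q₁,q₂,p₁,p₂) = (−((q₁−1)p₁−α₀)p₁, q₂, 1/p₁, p₂). Let Ω be the 4×4 complex matrix with entries Ω₁₃ = Ω₂₄ = 1, Ω₃₁ = Ω₄₂ = −1 and all other entries 0. Then Φ₀ is a symplectic transformation: at every point of its domain Φ₀ is complex-differentiable and the 4×4 matrix J of its derivative satisfies Jᵀ·Ω·J = Ω. -/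
/-!
Φ₀ moves only the conjugate pair `(q₁, p₁)` and fixes `(q₂, p₂)`, so its Jacobian is the identity
on the second pair and the upper-triangular block `[[-p₁², ∂x/∂p₁], [0, -1/p₁²]]` on the first.
That block has determinant `1`, and a `2 × 2` block of determinant `1` preserves `dq ∧ dp`.
-/

open ContinuousLinearMap
open scoped Matrix

section Derivatives

variable {𝕜 κ : Type*} [NontriviallyNormedField 𝕜] [Fintype κ]

theorem hasFDerivAt_mulVecLin_of_rows {ι : Type*} [CompleteSpace 𝕜] (f : (κ → 𝕜) → ι → 𝕜)
    (J : Matrix ι κ 𝕜) (v : κ → 𝕜)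
    (hf : ∀ i, HasFDerivAt (fun w => f w i) (∑ j, J i j • (proj j : (κ → 𝕜) →L[𝕜] 𝕜)) v) :
    HasFDerivAt f (Matrix.mulVecLin J).toContinuousLinearMap v := by
  refine hasFDerivAt_pi'' fun i => (hf i).congr_fderiv ?_
  ext x
  simp [Matrix.mulVec, dotProduct]

theorem hasFDerivAt_one_div_apply {v : κ → 𝕜} {j : κ} (hv : v j ≠ 0) :
    HasFDerivAt (fun w : κ → 𝕜 => 1 / w j) (-(v j ^ 2)⁻¹ • (proj j : (κ → 𝕜) →L[𝕜] 𝕜)) v := by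
  simpa only [one_div, Function.comp_def] using
    (hasDerivAt_inv hv).comp_hasFDerivAt v (hasFDerivAt_apply j v)

theorem hasFDerivAt_resolvedCoord (α : 𝕜) (v : κ → 𝕜) (i j : κ) :
    HasFDerivAt (fun w : κ → 𝕜 => -((w i - 1) * w j - α) * w j)
      (-v j ^ 2 • (proj i : (κ → 𝕜) →L[𝕜] 𝕜) + (α - 2 * (v i - 1) * v j) • proj j) v := by
  have hi := hasFDerivAt_apply (𝕜 := 𝕜) i v
  have hj := hasFDerivAt_apply (𝕜 := 𝕜) j v
  refine ((((hi.sub_const 1).mul hj).sub_const α).neg.mul hj).congr_fderiv ?_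
  ext x
  simp
  ring

end Derivatives

section Symplectic

variable {R : Type*} [CommRing R]

def canonicalSymplectic4 : Matrix (Fin 4) (Fin 4) R :=
  !![0, 0, 1, 0; 0, 0, 0, 1; -1, 0, 0, 0; 0, -1, 0, 0]

def planeBlock (a b c d : R) : Matrix (Fin 4) (Fin 4) R :=
  !![a, 0, b, 0; 0, 1, 0, 0; c, 0, d, 0; 0, 0, 0, 1]

theorem planeBlock_transpose_mul_mul {a b c d : R} (h : a * d - b * c = 1) :
    (planeBlock a b c d)ᵀ * canonicalSymplectic4 * planeBlock a b c d = canonicalSymplectic4 := by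
  ext i j
  fin_cases i <;> fin_cases j <;>
    simp [planeBlock, canonicalSymplectic4, Matrix.mul_apply, Fin.sum_univ_four] <;>
    grind

end Symplectic

/-- The coordinate system `Φ₀ = (x₂^{[01]}, y₂^{[01]}, z₂^{[01]}, w₂^{[01]})` resolving
the accessible singularity `C₂^{(01)}` of the fourth-order FST Painlevé system,
`Φ₀(q₁,q₂,p₁,p₂) = (−((q₁−1)p₁−α₀)p₁, q₂, 1/p₁, p₂)`, is a symplectic
transformation: at every point of its domain `{p₁ ≠ 0}` it is complex-differentiable
and its Jacobian matrix `J` satisfies `Jᵀ Ω J = Ω`, where `Ω` is the matrix of the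
canonical symplectic form (coordinates ordered `(q₁,q₂,p₁,p₂)`). -/
theorem Phi0_symplectic (α₀ : ℂ) (v : Fin 4 → ℂ) (hv : v 2 ≠ 0) :
    ∃ J : Matrix (Fin 4) (Fin 4) ℂ,
      HasFDerivAt
        (fun w : Fin 4 → ℂ =>
          (![-((w 0 - 1) * w 2 - α₀) * w 2, w 1, 1 / w 2, w 3] :
            Fin 4 → ℂ))
        (LinearMap.toContinuousLinearMap (Matrix.mulVecLin J)) v ∧
      J.transpose * (!![0, 0, 1, 0; 0, 0, 0, 1; -1, 0, 0, 0; 0, -1, 0, 0] :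
          Matrix (Fin 4) (Fin 4) ℂ) * J =
        !![0, 0, 1, 0; 0, 0, 0, 1; -1, 0, 0, 0; 0, -1, 0, 0] := by
  refine ⟨planeBlock (-v 2 ^ 2) (α₀ - 2 * (v 0 - 1) * v 2) 0 (-(v 2 ^ 2)⁻¹), ?_,
    planeBlock_transpose_mul_mul (by simp [hv])⟩
  refine hasFDerivAt_mulVecLin_of_rows _ _ v fun i => ?_
  fin_cases i <;>
    [refine (hasFDerivAt_resolvedCoord α₀ v 0 2).congr_fderiv ?_;
     refine (hasFDerivAt_apply 1 v).congr_fderiv ?_;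
     refine (hasFDerivAt_one_div_apply hv).congr_fderiv ?_;
     refine (hasFDerivAt_apply 3 v).congr_fderiv ?_] <;>
    ext x <;> simp [Fin.sum_univ_four, planeBlock]
end

section
/- Fix α₅, η ∈ ℂ. Define Φ₅ : {(q₁,q₂,p₁,p₂) ∈ ℂ⁴ : p₁ ≠ 0} → ℂ⁴ by Φ₅(q₁,q₂,p₁,p₂) = (−(q₁p₁+q₂p₂−α₅+η)p₁, q₂p₁, 1/p₁, p₂/p₁). Let Ω be the 4×4 complex matrix with entries Ω₁₃ = Ω₂₄ = 1, Ω₃₁ = Ω₄₂ = −1 and all other entries 0. Then Φ₅ is a symplectic transformation: at every point of its domain Φ₅ is complex-differentiable and the 4×4 matrix J of its derivative satisfies Jᵀ·Ω·J = Ω. -/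
open Matrix ContinuousLinearMap

section

variable {𝕜 : Type*} [NontriviallyNormedField 𝕜] [CompleteSpace 𝕜] {m n : Type*} [Fintype n]

theorem Matrix.proj_comp_toContinuousLinearMap_mulVecLin (J : Matrix m n 𝕜) (i : m) :
    (proj i).comp (LinearMap.toContinuousLinearMap (mulVecLin J)) =
      ∑ j, J i j • (proj j : (n → 𝕜) →L[𝕜] 𝕜) := by
  ext u
  simp [mulVec, dotProduct]

theorem Matrix.hasFDerivAt_mulVecLin_of_rows {f : (n → 𝕜) → m → 𝕜} {J : Matrix m n 𝕜}
    {v : n → 𝕜}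
    (h : ∀ i, HasFDerivAt (fun w => f w i) (∑ j, J i j • (proj j : (n → 𝕜) →L[𝕜] 𝕜)) v) :
    HasFDerivAt f (LinearMap.toContinuousLinearMap (mulVecLin J)) v :=
  hasFDerivAt_pi'' fun i => (proj_comp_toContinuousLinearMap_mulVecLin J i).symm ▸ h i

end

noncomputable def phi5 (α₅ η : ℂ) (w : Fin 4 → ℂ) : Fin 4 → ℂ :=
  ![-(w 0 * w 2 + w 1 * w 3 - α₅ + η) * w 2, w 1 * w 2, 1 / w 2, w 3 / w 2]

noncomputable def phi5Jacobian (α₅ η : ℂ) (v : Fin 4 → ℂ) : Matrix (Fin 4) (Fin 4) ℂ :=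
  !![-(v 2 ^ 2), -(v 2 * v 3), -(2 * v 0 * v 2 + v 1 * v 3 - α₅ + η), -(v 1 * v 2);
     0, v 2, v 1, 0;
     0, 0, -(v 2 ^ 2)⁻¹, 0;
     0, 0, -(v 3 / v 2 ^ 2), (v 2)⁻¹]

theorem hasFDerivAt_phi5 (α₅ η : ℂ) {v : Fin 4 → ℂ} (hv : v 2 ≠ 0) :
    HasFDerivAt (phi5 α₅ η)
      (LinearMap.toContinuousLinearMap (mulVecLin (phi5Jacobian α₅ η v))) v := by
  have hp := fun i : Fin 4 => hasFDerivAt_apply (𝕜 := ℂ) i v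
  have hinv : HasFDerivAt (fun w : Fin 4 → ℂ => (w 2)⁻¹) _ v :=
    (hasFDerivAt_inv hv).comp v (hp 2)
  refine hasFDerivAt_mulVecLin_of_rows fun i => ?_
  fin_cases i
  · exact ((((((hp 0).mul (hp 2)).add ((hp 1).mul (hp 3))).sub_const α₅).add_const η).neg.mul
      (hp 2)).congr_fderiv (by ext u; simp [phi5Jacobian, Fin.sum_univ_four]; ring)
  · exact ((hp 1).mul (hp 2)).congr_fderiv
      (by ext u; simp [phi5Jacobian, Fin.sum_univ_four]; ring)
  · simp only [phi5, one_div]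
    exact hinv.congr_fderiv (by ext u; simp [phi5Jacobian, Fin.sum_univ_four]; ring)
  · simp only [phi5, div_eq_mul_inv]
    exact ((hp 3).mul hinv).congr_fderiv
      (by ext u; simp [phi5Jacobian, Fin.sum_univ_four]; field_simp)

/- In 2 × 2 blocks the Jacobian is `[[A, B], [0, D]]`, and `Jᵀ Ω J = Ω` amounts to
`Aᵀ D = 1` together with the symmetry of `Bᵀ D`. -/
theorem phi5Jacobian_symplectic (α₅ η : ℂ) {v : Fin 4 → ℂ} (hv : v 2 ≠ 0) :
    (phi5Jacobian α₅ η v)ᵀ * !![0, 0, 1, 0; 0, 0, 0, 1; -1, 0, 0, 0; 0, -1, 0, 0] *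
        phi5Jacobian α₅ η v = !![0, 0, 1, 0; 0, 0, 0, 1; -1, 0, 0, 0; 0, -1, 0, 0] := by
  ext i j
  fin_cases i <;> fin_cases j <;> simp [phi5Jacobian, mul_apply, Fin.sum_univ_four] <;>
    field_simp <;> ring

/-- The coordinate system `Φ₅ = (x₃^{[01]}, y₃^{[01]}, z₃^{[01]}, w₃^{[01]})` resolving
the accessible singularity `C₃^{(01)}` of the fourth-order FST Painlevé system,
`Φ₅(q₁,q₂,p₁,p₂) = (−(q₁p₁+q₂p₂−α₅+η)p₁, q₂p₁, 1/p₁, p₂/p₁)`, is a symplectic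
transformation: at every point of its domain `{p₁ ≠ 0}` it is complex-differentiable
and its Jacobian matrix `J` satisfies `Jᵀ Ω J = Ω`, where `Ω` is the matrix of the
canonical symplectic form (coordinates ordered `(q₁,q₂,p₁,p₂)`). -/
theorem Phi5_symplectic (α₅ η : ℂ) (v : Fin 4 → ℂ) (hv : v 2 ≠ 0) :
    ∃ J : Matrix (Fin 4) (Fin 4) ℂ,
      HasFDerivAt
        (fun w : Fin 4 → ℂ =>
          (![-(w 0 * w 2 + w 1 * w 3 - α₅ + η) * w 2, w 1 * w 2, 1 / w 2, w 3 / w 2] :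
            Fin 4 → ℂ))
        (LinearMap.toContinuousLinearMap (Matrix.mulVecLin J)) v ∧
      J.transpose * (!![0, 0, 1, 0; 0, 0, 0, 1; -1, 0, 0, 0; 0, -1, 0, 0] :
          Matrix (Fin 4) (Fin 4) ℂ) * J =
        !![0, 0, 1, 0; 0, 0, 0, 1; -1, 0, 0, 0; 0, -1, 0, 0] :=
  ⟨phi5Jacobian α₅ η v, hasFDerivAt_phi5 α₅ η hv, phi5Jacobian_symplectic α₅ η hv⟩
end

section
/- Let q₁, q₂, p₁, p₂ be holomorphic functions on a connected open set U ⊆ ℂ∖{0,1} satisfying Hamilton's equations q₁′ = ∂H/∂p₁, q₂′ = ∂H/∂p₂, p₁′ = −∂H/∂q₁, p₂′ = −∂H/∂q₂ (partial derivatives of H(t;q₁,q₂,p₁,p₂) in the indicated variable, evaluated along the solution), and suppose p₁(t) ≠ 0 for all t ∈ U. Then P₁ := 1/p₁ and P₂ := p₂/p₁ together with q₁, q₂ satisfy the W₀₁-system (E1)–(E4) on U. -/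
/-- The Painlevé VI-type Hamiltonian `H_VI(a,b,c,d;q,p)`. -/
noncomputable def Hvi (t a b c d q p : ℂ) : ℂ :=
  (q * (q - 1) * (q - t) * p ^ 2 -
      (a * (q - 1) * (q - t) + b * q * (q - t) + (c - 1) * q * (q - 1)) * p + d * q) /
    (t * (t - 1))

/-- The Hamiltonian of the fourth-order FST Painlevé system. -/
noncomputable def HFST (α₀ α₁ α₂ α₃ α₄ α₅ η t q₁ q₂ p₁ p₂ : ℂ) : ℂ :=
  Hvi t (α₃ + α₅ - η) α₀ (α₂ + α₄) (α₁ * η) q₁ p₁ +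
    Hvi t (α₁ + α₅ - η) (α₀ + α₂) α₄ (α₃ * η) q₂ p₂ +
    (q₁ - 1) * (q₂ - t) * ((q₁ * p₁ + α₁) * p₂ + (q₂ * p₂ + α₃) * p₁) / (t * (t - 1))

/-!
Along a solution, Hamilton's equations make `q₁′, q₂′, p₁′, p₂′` the partial derivatives of `H`,
which are explicit polynomials in `(q₁, q₂, p₁, p₂)` divided by `t(t-1)`. Rewriting them in
`P₁ = 1/p₁`, `P₂ = p₂/p₁` by the quotient rule turns (E1)–(E4) into polynomial identities, which
hold modulo `α₀ + ⋯ + α₅ - 1`.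
-/

theorem hasDerivAt_Hvi_p (t a b c d q p : ℂ) :
    HasDerivAt (Hvi t a b c d q)
      ((2 * q * (q - 1) * (q - t) * p -
        (a * (q - 1) * (q - t) + b * q * (q - t) + (c - 1) * q * (q - 1))) / (t * (t - 1))) p := by
  have hx := hasDerivAt_id' p
  refine (((((hx.pow 2).const_mul (q * (q - 1) * (q - t))).sub
    (hx.const_mul (a * (q - 1) * (q - t) + b * q * (q - t) + (c - 1) * q * (q - 1)))).add_const
    (d * q)).div_const (t * (t - 1))).congr_deriv ?_
  ring

theorem hasDerivAt_Hvi_q (t a b c d q p : ℂ) :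
    HasDerivAt (fun x => Hvi t a b c d x p)
      (((3 * q ^ 2 - 2 * (t + 1) * q + t) * p ^ 2 -
        (a * (2 * q - t - 1) + b * (2 * q - t) + (c - 1) * (2 * q - 1)) * p + d) /
          (t * (t - 1))) q := by
  have hx := hasDerivAt_id' q
  -- each term follows the syntax tree of `Hvi`, so only the derivative value needs `ring`
  have hcubic := (hx.fun_mul (hx.sub_const 1)).fun_mul (hx.sub_const t)
  have hquad := ((((hx.sub_const 1).const_mul a).fun_mul (hx.sub_const t)).fun_add
    ((hx.const_mul b).fun_mul (hx.sub_const t))).fun_add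
      ((hx.const_mul (c - 1)).fun_mul (hx.sub_const 1))
  refine (((hcubic.mul_const (p ^ 2)).fun_sub (hquad.mul_const p)).fun_add
    (hx.const_mul d)).div_const (t * (t - 1)) |>.congr_deriv ?_
  ring

section PartialDerivatives

variable (α₀ α₁ α₂ α₃ α₄ α₅ η t q₁ q₂ p₁ p₂ : ℂ)

theorem hasDerivAt_HFST_p₁ :
    HasDerivAt (fun x => HFST α₀ α₁ α₂ α₃ α₄ α₅ η t q₁ q₂ x p₂)
      ((2 * q₁ * (q₁ - 1) * (q₁ - t) * p₁ - ((α₃ + α₅ - η) * (q₁ - 1) * (q₁ - t) +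
        α₀ * q₁ * (q₁ - t) + (α₂ + α₄ - 1) * q₁ * (q₁ - 1)) +
          (q₁ - 1) * (q₂ - t) * ((q₁ + q₂) * p₂ + α₃)) / (t * (t - 1))) p₁ := by
  have hx := hasDerivAt_id' p₁
  have hK := ((((hx.const_mul q₁).add_const α₁).mul_const p₂).fun_add
    (hx.const_mul (q₂ * p₂ + α₃))).const_mul ((q₁ - 1) * (q₂ - t)) |>.div_const (t * (t - 1))
  refine (((hasDerivAt_Hvi_p ..).add_const _).fun_add hK).congr_deriv ?_
  ring

theorem hasDerivAt_HFST_p₂ :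
    HasDerivAt (fun x => HFST α₀ α₁ α₂ α₃ α₄ α₅ η t q₁ q₂ p₁ x)
      ((2 * q₂ * (q₂ - 1) * (q₂ - t) * p₂ - ((α₁ + α₅ - η) * (q₂ - 1) * (q₂ - t) +
        (α₀ + α₂) * q₂ * (q₂ - t) + (α₄ - 1) * q₂ * (q₂ - 1)) +
          (q₁ - 1) * (q₂ - t) * ((q₁ + q₂) * p₁ + α₁)) / (t * (t - 1))) p₂ := by
  have hx := hasDerivAt_id' p₂
  have hK := ((hx.const_mul (q₁ * p₁ + α₁)).fun_add
    (((hx.const_mul q₂).add_const α₃).mul_const p₁)).const_mul ((q₁ - 1) * (q₂ - t))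
      |>.div_const (t * (t - 1))
  refine (((hasDerivAt_Hvi_p ..).const_add _).fun_add hK).congr_deriv ?_
  ring

theorem hasDerivAt_HFST_q₁ :
    HasDerivAt (fun x => HFST α₀ α₁ α₂ α₃ α₄ α₅ η t x q₂ p₁ p₂)
      (((3 * q₁ ^ 2 - 2 * (t + 1) * q₁ + t) * p₁ ^ 2 - ((α₃ + α₅ - η) * (2 * q₁ - t - 1) +
        α₀ * (2 * q₁ - t) + (α₂ + α₄ - 1) * (2 * q₁ - 1)) * p₁ + α₁ * η +
          (q₂ - t) * ((2 * q₁ - 1) * p₁ * p₂ + α₁ * p₂ + (q₂ * p₂ + α₃) * p₁)) /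
            (t * (t - 1))) q₁ := by
  have hx := hasDerivAt_id' q₁
  have hK := (((hx.sub_const 1).mul_const (q₂ - t)).fun_mul
    ((((hx.mul_const p₁).add_const α₁).mul_const p₂).add_const ((q₂ * p₂ + α₃) * p₁)))
      |>.div_const (t * (t - 1))
  refine (((hasDerivAt_Hvi_q ..).add_const _).fun_add hK).congr_deriv ?_
  ring

theorem hasDerivAt_HFST_q₂ :
    HasDerivAt (fun x => HFST α₀ α₁ α₂ α₃ α₄ α₅ η t q₁ x p₁ p₂)
      (((3 * q₂ ^ 2 - 2 * (t + 1) * q₂ + t) * p₂ ^ 2 - ((α₁ + α₅ - η) * (2 * q₂ - t - 1) +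
        (α₀ + α₂) * (2 * q₂ - t) + (α₄ - 1) * (2 * q₂ - 1)) * p₂ + α₃ * η +
          (q₁ - 1) * ((2 * q₂ - t) * p₁ * p₂ + α₁ * p₂ + α₃ * p₁ + q₁ * p₁ * p₂)) /
            (t * (t - 1))) q₂ := by
  have hx := hasDerivAt_id' q₂
  have hK := (((hx.sub_const t).const_mul (q₁ - 1)).fun_mul
    (((hx.mul_const p₂).add_const α₃).mul_const p₁ |>.const_add ((q₁ * p₁ + α₁) * p₂)))
      |>.div_const (t * (t - 1))
  refine (((hasDerivAt_Hvi_q ..).const_add _).fun_add hK).congr_deriv ?_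
  ring

end PartialDerivatives

theorem W01_system_of_hamiltonian_solution_general
    (α₀ α₁ α₂ α₃ α₄ α₅ η : ℂ) (hsum : α₀ + α₁ + α₂ + α₃ + α₄ + α₅ = 1)
    (U : Set ℂ) (hUopen : IsOpen U)
    (hUsub : ∀ t ∈ U, t ≠ 0 ∧ t ≠ 1)
    (q₁ q₂ p₁ p₂ : ℂ → ℂ)
    (hp₁ : DifferentiableOn ℂ p₁ U) (hp₂ : DifferentiableOn ℂ p₂ U)
    (ham₁ : ∀ t ∈ U, deriv q₁ t =
      deriv (fun x => HFST α₀ α₁ α₂ α₃ α₄ α₅ η t (q₁ t) (q₂ t) x (p₂ t)) (p₁ t))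
    (ham₂ : ∀ t ∈ U, deriv q₂ t =
      deriv (fun x => HFST α₀ α₁ α₂ α₃ α₄ α₅ η t (q₁ t) (q₂ t) (p₁ t) x) (p₂ t))
    (ham₃ : ∀ t ∈ U, deriv p₁ t =
      -deriv (fun x => HFST α₀ α₁ α₂ α₃ α₄ α₅ η t x (q₂ t) (p₁ t) (p₂ t)) (q₁ t))
    (ham₄ : ∀ t ∈ U, deriv p₂ t =
      -deriv (fun x => HFST α₀ α₁ α₂ α₃ α₄ α₅ η t (q₁ t) x (p₁ t) (p₂ t)) (q₂ t))
    (hp₁ne : ∀ t ∈ U, p₁ t ≠ 0) :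
    ∀ t ∈ U,
      -- (E1)
      (t * (t - 1) * deriv q₁ t =
        (α₁ + η) * (q₁ t) ^ 2 + α₃ * (q₁ t) * (q₂ t) +
          ((α₀ + α₅ - η) * t - (α₀ + α₁ + η)) * (q₁ t) - α₃ * (q₂ t) - (α₅ - η) * t +
          ((q₁ t - 1) * (q₁ t + q₂ t) * (q₂ t - t) * (p₂ t / p₁ t) +
            2 * (q₁ t) * (q₁ t - 1) * (q₁ t - t)) / (p₁ t)⁻¹) ∧
      -- (E2)
      (t * (t - 1) * deriv q₂ t =
        α₁ * (q₁ t) * (q₂ t) + (α₃ + η) * (q₂ t) ^ 2 - α₁ * t * (q₁ t) -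
          ((α₃ + α₄ + η - 1) * t - (α₄ + α₅ - η - 1)) * (q₂ t) - (α₅ - η) * t +
          (2 * (q₂ t) * (q₂ t - 1) * (q₂ t - t) * (p₂ t / p₁ t) +
            (q₁ t - 1) * (q₁ t + q₂ t) * (q₂ t - t)) / (p₁ t)⁻¹) ∧
      -- (E3)
      (t * (t - 1) * deriv (fun s => (p₁ s)⁻¹) t =
        α₁ * η * ((p₁ t)⁻¹) ^ 2 +
          (2 * (α₁ + η) * (q₁ t) + α₃ * (q₂ t) + (α₀ + α₅ - η) * t - (α₀ + α₁ + η)) *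
            (p₁ t)⁻¹ +
          α₁ * (q₂ t - t) * (p₁ t)⁻¹ * (p₂ t / p₁ t) +
          (2 * (q₁ t) + q₂ t - 1) * (q₂ t - t) * (p₂ t / p₁ t) +
          3 * (q₁ t) ^ 2 - 2 * (t + 1) * (q₁ t) + t) ∧
      -- (E4)
      (t * (t - 1) * deriv (fun s => p₂ s / p₁ s) t =
        η * (α₁ * (p₂ t / p₁ t) - α₃) * (p₁ t)⁻¹ +
          α₁ * (q₂ t - t) * (p₂ t / p₁ t) ^ 2 +
          ((α₁ + 2 * η) * (q₁ t) - (α₃ + 2 * η) * (q₂ t) - (α₁ + α₂) * t + α₂ + α₃) *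
            (p₂ t / p₁ t) -
          α₃ * (q₁ t - 1) +
          ((2 * (q₁ t) * (q₂ t) - 2 * (q₂ t) ^ 2 - 2 * t * (q₁ t) + (t + 1) * (q₂ t)) *
              (p₂ t / p₁ t) ^ 2 +
            (2 * (q₁ t) ^ 2 - 2 * (q₁ t) * (q₂ t) - (t + 1) * (q₁ t) + 2 * (q₂ t)) *
              (p₂ t / p₁ t)) / (p₁ t)⁻¹) := by
  intro t ht
  -- `ht₀`, `ht₁` and `hp` are the denominators `field_simp` clears below
  obtain ⟨ht₀, ht₁⟩ := hUsub t ht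
  have hp := hp₁ne t ht
  have hdp₁ := (hp₁.differentiableAt (hUopen.mem_nhds ht)).hasDerivAt
  have hdp₂ := (hp₂.differentiableAt (hUopen.mem_nhds ht)).hasDerivAt
  rw [(hdp₁.fun_inv hp).deriv, (hdp₂.fun_div hdp₁ hp).deriv,
    ham₁ t ht, ham₂ t ht, ham₃ t ht, ham₄ t ht,
    (hasDerivAt_HFST_p₁ ..).deriv, (hasDerivAt_HFST_p₂ ..).deriv,
    (hasDerivAt_HFST_q₁ ..).deriv, (hasDerivAt_HFST_q₂ ..).deriv]
  refine ⟨?_, ?_, ?_, ?_⟩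
  · field_simp
    linear_combination (q₁ t - q₁ t ^ 2) * hsum
  · field_simp
    linear_combination (t * q₂ t - q₂ t ^ 2) * hsum
  · field_simp
    linear_combination (1 - 2 * q₁ t) * p₁ t * hsum
  · field_simp
    linear_combination 2 * (q₂ t - q₁ t) * p₁ t * p₂ t * hsum

/-- If `(q₁,q₂,p₁,p₂)` is a holomorphic solution of the FST Hamiltonian system on a
connected open set `U ⊆ ℂ∖{0,1}` with `p₁` nowhere vanishing on `U`, then
`(q₁, q₂, P₁, P₂) = (q₁, q₂, 1/p₁, p₂/p₁)` satisfies the `W₀₁`-system (E1)–(E4)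
on `U`. -/
theorem W01_system_of_hamiltonian_solution
    (α₀ α₁ α₂ α₃ α₄ α₅ η : ℂ) (hsum : α₀ + α₁ + α₂ + α₃ + α₄ + α₅ = 1)
    (U : Set ℂ) (hUopen : IsOpen U) (hUconn : IsConnected U)
    (hUsub : ∀ t ∈ U, t ≠ 0 ∧ t ≠ 1)
    (q₁ q₂ p₁ p₂ : ℂ → ℂ)
    (hq₁ : DifferentiableOn ℂ q₁ U) (hq₂ : DifferentiableOn ℂ q₂ U)
    (hp₁ : DifferentiableOn ℂ p₁ U) (hp₂ : DifferentiableOn ℂ p₂ U)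
    (ham₁ : ∀ t ∈ U, deriv q₁ t =
      deriv (fun x => HFST α₀ α₁ α₂ α₃ α₄ α₅ η t (q₁ t) (q₂ t) x (p₂ t)) (p₁ t))
    (ham₂ : ∀ t ∈ U, deriv q₂ t =
      deriv (fun x => HFST α₀ α₁ α₂ α₃ α₄ α₅ η t (q₁ t) (q₂ t) (p₁ t) x) (p₂ t))
    (ham₃ : ∀ t ∈ U, deriv p₁ t =
      -deriv (fun x => HFST α₀ α₁ α₂ α₃ α₄ α₅ η t x (q₂ t) (p₁ t) (p₂ t)) (q₁ t))
    (ham₄ : ∀ t ∈ U, deriv p₂ t =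
      -deriv (fun x => HFST α₀ α₁ α₂ α₃ α₄ α₅ η t (q₁ t) x (p₁ t) (p₂ t)) (q₂ t))
    (hp₁ne : ∀ t ∈ U, p₁ t ≠ 0) :
    ∀ t ∈ U,
      -- (E1)
      (t * (t - 1) * deriv q₁ t =
        (α₁ + η) * (q₁ t) ^ 2 + α₃ * (q₁ t) * (q₂ t) +
          ((α₀ + α₅ - η) * t - (α₀ + α₁ + η)) * (q₁ t) - α₃ * (q₂ t) - (α₅ - η) * t +
          ((q₁ t - 1) * (q₁ t + q₂ t) * (q₂ t - t) * (p₂ t / p₁ t) +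
            2 * (q₁ t) * (q₁ t - 1) * (q₁ t - t)) / (p₁ t)⁻¹) ∧
      -- (E2)
      (t * (t - 1) * deriv q₂ t =
        α₁ * (q₁ t) * (q₂ t) + (α₃ + η) * (q₂ t) ^ 2 - α₁ * t * (q₁ t) -
          ((α₃ + α₄ + η - 1) * t - (α₄ + α₅ - η - 1)) * (q₂ t) - (α₅ - η) * t +
          (2 * (q₂ t) * (q₂ t - 1) * (q₂ t - t) * (p₂ t / p₁ t) +
            (q₁ t - 1) * (q₁ t + q₂ t) * (q₂ t - t)) / (p₁ t)⁻¹) ∧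
      -- (E3)
      (t * (t - 1) * deriv (fun s => (p₁ s)⁻¹) t =
        α₁ * η * ((p₁ t)⁻¹) ^ 2 +
          (2 * (α₁ + η) * (q₁ t) + α₃ * (q₂ t) + (α₀ + α₅ - η) * t - (α₀ + α₁ + η)) *
            (p₁ t)⁻¹ +
          α₁ * (q₂ t - t) * (p₁ t)⁻¹ * (p₂ t / p₁ t) +
          (2 * (q₁ t) + q₂ t - 1) * (q₂ t - t) * (p₂ t / p₁ t) +
          3 * (q₁ t) ^ 2 - 2 * (t + 1) * (q₁ t) + t) ∧
      -- (E4)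
      (t * (t - 1) * deriv (fun s => p₂ s / p₁ s) t =
        η * (α₁ * (p₂ t / p₁ t) - α₃) * (p₁ t)⁻¹ +
          α₁ * (q₂ t - t) * (p₂ t / p₁ t) ^ 2 +
          ((α₁ + 2 * η) * (q₁ t) - (α₃ + 2 * η) * (q₂ t) - (α₁ + α₂) * t + α₂ + α₃) *
            (p₂ t / p₁ t) -
          α₃ * (q₁ t - 1) +
          ((2 * (q₁ t) * (q₂ t) - 2 * (q₂ t) ^ 2 - 2 * t * (q₁ t) + (t + 1) * (q₂ t)) *
              (p₂ t / p₁ t) ^ 2 +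
            (2 * (q₁ t) ^ 2 - 2 * (q₁ t) * (q₂ t) - (t + 1) * (q₁ t) + 2 * (q₂ t)) *
              (p₂ t / p₁ t)) / (p₁ t)⁻¹) :=
  W01_system_of_hamiltonian_solution_general α₀ α₁ α₂ α₃ α₄ α₅ η hsum U hUopen hUsub q₁ q₂ p₁ p₂ hp₁
    hp₂ ham₁ ham₂ ham₃ ham₄ hp₁ne
end

section
/- Let t₀ ∈ ℂ∖{0,1} and b₀ ∈ ℂ. Let q₁, q₂, P₁, P₂ be holomorphic functions on a neighborhood of t₀ with (q₁(t₀), q₂(t₀), P₁(t₀), P₂(t₀)) = (1, b₀, 0, 0), which satisfy on that neighborhood equation (E3) of the W₀₁-system together with the denominator-cleared forms of (E1), (E2) and (E4) (each obtained by multiplying both sides by P₁). Then P₁′(t₀) = −1/t₀ and q₁′(t₀) = −α₀/t₀. -/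
/-!
Evaluating (E3) at `t₀` already gives `t₀ (t₀ - 1) P₁′(t₀) = 1 - t₀`. The cleared (E1) reads
`(t (t - 1) q₁′ - A) P₁ = D (q₁ - 1)` with `A(t₀) = α₀ (t₀ - 1)` and `D(t₀) = 2 (1 - t₀)`. Since `P₁` and
`q₁ - 1` vanish at `t₀`, differentiating once there only sees the derivatives of these two factors:
`(t₀ (t₀ - 1) q₁′(t₀) - α₀ (t₀ - 1)) P₁′(t₀) = 2 (1 - t₀) q₁′(t₀)`, which determines `q₁′(t₀)`.
-/

open Filter Topology

section VanishingFactor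

variable {𝕜 : Type*} [NontriviallyNormedField 𝕜] {f g h k : 𝕜 → 𝕜} {f' h' x : 𝕜}

theorem HasDerivAt.mul_of_apply_eq_zero (hf : HasDerivAt f f' x) (hfx : f x = 0)
    (hg : ContinuousAt g x) : HasDerivAt (fun y => g y * f y) (g x * f') x := by
  rw [hasDerivAt_iff_tendsto_slope] at hf ⊢
  have hslope : slope (fun y => g y * f y) x = fun y => g y * slope f x y := by
    ext y
    simp only [slope_def_field, hfx, mul_zero, sub_zero, mul_div_assoc]
  rw [hslope]
  exact (hg.tendsto.mono_left nhdsWithin_le_nhds).mul hf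

theorem HasDerivAt.mul_eq_mul_of_eventuallyEq (hf : HasDerivAt f f' x) (hh : HasDerivAt h h' x)
    (hfx : f x = 0) (hhx : h x = 0) (hg : ContinuousAt g x) (hk : ContinuousAt k x)
    (heq : (fun y => g y * f y) =ᶠ[𝓝 x] fun y => k y * h y) : g x * f' = k x * h' :=
  (hf.mul_of_apply_eq_zero hfx hg).unique
    ((hh.mul_of_apply_eq_zero hhx hk).congr_of_eventuallyEq heq)

end VanishingFactor

theorem leading_coefficients_at_C2_01_general
    (α₀ α₁ α₃ α₅ η : ℂ)
    (t₀ : ℂ) (ht₀0 : t₀ ≠ 0) (ht₀1 : t₀ ≠ 1)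
    (U : Set ℂ) (hUopen : IsOpen U) (ht₀U : t₀ ∈ U)
    (q₁ q₂ P₁ P₂ : ℂ → ℂ)
    (hq₁ : DifferentiableOn ℂ q₁ U) (hq₂ : DifferentiableOn ℂ q₂ U)
    (hP₁ : DifferentiableOn ℂ P₁ U) (hP₂ : DifferentiableOn ℂ P₂ U)
    (hinit₁ : q₁ t₀ = 1) (hinit₃ : P₁ t₀ = 0) (hinit₄ : P₂ t₀ = 0)
    -- (E1), cleared of its denominator `P₁`
    (hE₁ : ∀ t ∈ U, t * (t - 1) * deriv q₁ t * P₁ t =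
      ((α₁ + η) * (q₁ t) ^ 2 + α₃ * (q₁ t) * (q₂ t) +
          ((α₀ + α₅ - η) * t - (α₀ + α₁ + η)) * (q₁ t) - α₃ * (q₂ t) - (α₅ - η) * t) *
        P₁ t +
        ((q₁ t - 1) * (q₁ t + q₂ t) * (q₂ t - t) * P₂ t +
          2 * (q₁ t) * (q₁ t - 1) * (q₁ t - t)))
    -- (E3)
    (hE₃ : ∀ t ∈ U, t * (t - 1) * deriv P₁ t =
      α₁ * η * (P₁ t) ^ 2 +
        (2 * (α₁ + η) * (q₁ t) + α₃ * (q₂ t) + (α₀ + α₅ - η) * t - (α₀ + α₁ + η)) *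
          P₁ t +
        α₁ * (q₂ t - t) * P₁ t * P₂ t +
        (2 * (q₁ t) + q₂ t - 1) * (q₂ t - t) * P₂ t +
        3 * (q₁ t) ^ 2 - 2 * (t + 1) * (q₁ t) + t) :
    deriv P₁ t₀ = -1 / t₀ ∧ deriv q₁ t₀ = -α₀ / t₀ := by
  have hU : U ∈ 𝓝 t₀ := hUopen.mem_nhds ht₀U
  have ht₀1' : t₀ - 1 ≠ 0 := sub_ne_zero.mpr ht₀1
  have hP₁' : deriv P₁ t₀ = -1 / t₀ := by
    have h := hE₃ t₀ ht₀U
    rw [hinit₁, hinit₃, hinit₄] at h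
    field_simp
    exact mul_left_cancel₀ ht₀1' (by linear_combination h)
  refine ⟨hP₁', ?_⟩
  have hcont {f : ℂ → ℂ} (hf : DifferentiableOn ℂ f U) : ContinuousAt f t₀ :=
    (hf.differentiableAt hU).continuousAt
  have hq₁c := hcont hq₁
  have hq₂c := hcont hq₂
  have hP₂c := hcont hP₂
  have hdq₁c := hcont (hq₁.deriv hUopen)
  have hE₁' : (fun t => (t * (t - 1) * deriv q₁ t - ((α₁ + η) * q₁ t ^ 2 + α₃ * q₁ t * q₂ t +
        ((α₀ + α₅ - η) * t - (α₀ + α₁ + η)) * q₁ t - α₃ * q₂ t - (α₅ - η) * t)) * P₁ t)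
      =ᶠ[𝓝 t₀] fun t => ((q₁ t + q₂ t) * (q₂ t - t) * P₂ t + 2 * q₁ t * (q₁ t - t)) * (q₁ t - 1) :=
    eventually_of_mem hU fun t ht => by linear_combination hE₁ t ht
  have hE₁_deriv := (hP₁.differentiableAt hU).hasDerivAt.mul_eq_mul_of_eventuallyEq
    ((hq₁.differentiableAt hU).hasDerivAt.sub_const 1) hinit₃ (sub_eq_zero.mpr hinit₁)
    (by fun_prop) (by fun_prop) hE₁'
  rw [hinit₁, hinit₄, hP₁'] at hE₁_deriv
  field_simp at hE₁_deriv
  field_simp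
  exact mul_left_cancel₀ ht₀1' (by linear_combination hE₁_deriv)

/-- A holomorphic solution of the `W₀₁`-system (in the denominator-cleared form)
through the point `(1, b₀, 0, 0)` of the accessible singularity `C₂^{(01)}`
satisfies `P₁′(t₀) = −1/t₀` and `q₁′(t₀) = −α₀/t₀`. -/
theorem leading_coefficients_at_C2_01
    (α₀ α₁ α₂ α₃ α₄ α₅ η : ℂ) (hsum : α₀ + α₁ + α₂ + α₃ + α₄ + α₅ = 1)
    (t₀ : ℂ) (ht₀0 : t₀ ≠ 0) (ht₀1 : t₀ ≠ 1) (b₀ : ℂ)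
    (U : Set ℂ) (hUopen : IsOpen U) (ht₀U : t₀ ∈ U)
    (q₁ q₂ P₁ P₂ : ℂ → ℂ)
    (hq₁ : DifferentiableOn ℂ q₁ U) (hq₂ : DifferentiableOn ℂ q₂ U)
    (hP₁ : DifferentiableOn ℂ P₁ U) (hP₂ : DifferentiableOn ℂ P₂ U)
    (hinit₁ : q₁ t₀ = 1) (hinit₂ : q₂ t₀ = b₀) (hinit₃ : P₁ t₀ = 0) (hinit₄ : P₂ t₀ = 0)
    -- (E1), cleared of its denominator `P₁`
    (hE₁ : ∀ t ∈ U, t * (t - 1) * deriv q₁ t * P₁ t =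
      ((α₁ + η) * (q₁ t) ^ 2 + α₃ * (q₁ t) * (q₂ t) +
          ((α₀ + α₅ - η) * t - (α₀ + α₁ + η)) * (q₁ t) - α₃ * (q₂ t) - (α₅ - η) * t) *
        P₁ t +
        ((q₁ t - 1) * (q₁ t + q₂ t) * (q₂ t - t) * P₂ t +
          2 * (q₁ t) * (q₁ t - 1) * (q₁ t - t)))
    -- (E2), cleared of its denominator `P₁`
    (hE₂ : ∀ t ∈ U, t * (t - 1) * deriv q₂ t * P₁ t =
      (α₁ * (q₁ t) * (q₂ t) + (α₃ + η) * (q₂ t) ^ 2 - α₁ * t * (q₁ t) -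
          ((α₃ + α₄ + η - 1) * t - (α₄ + α₅ - η - 1)) * (q₂ t) - (α₅ - η) * t) *
        P₁ t +
        (2 * (q₂ t) * (q₂ t - 1) * (q₂ t - t) * P₂ t +
          (q₁ t - 1) * (q₁ t + q₂ t) * (q₂ t - t)))
    -- (E3)
    (hE₃ : ∀ t ∈ U, t * (t - 1) * deriv P₁ t =
      α₁ * η * (P₁ t) ^ 2 +
        (2 * (α₁ + η) * (q₁ t) + α₃ * (q₂ t) + (α₀ + α₅ - η) * t - (α₀ + α₁ + η)) *
          P₁ t +
        α₁ * (q₂ t - t) * P₁ t * P₂ t +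
        (2 * (q₁ t) + q₂ t - 1) * (q₂ t - t) * P₂ t +
        3 * (q₁ t) ^ 2 - 2 * (t + 1) * (q₁ t) + t)
    -- (E4), cleared of its denominator `P₁`
    (hE₄ : ∀ t ∈ U, t * (t - 1) * deriv P₂ t * P₁ t =
      (η * (α₁ * P₂ t - α₃) * P₁ t + α₁ * (q₂ t - t) * (P₂ t) ^ 2 +
          ((α₁ + 2 * η) * (q₁ t) - (α₃ + 2 * η) * (q₂ t) - (α₁ + α₂) * t + α₂ + α₃) *
            P₂ t -
          α₃ * (q₁ t - 1)) *
        P₁ t +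
        ((2 * (q₁ t) * (q₂ t) - 2 * (q₂ t) ^ 2 - 2 * t * (q₁ t) + (t + 1) * (q₂ t)) *
            (P₂ t) ^ 2 +
          (2 * (q₁ t) ^ 2 - 2 * (q₁ t) * (q₂ t) - (t + 1) * (q₁ t) + 2 * (q₂ t)) *
            P₂ t)) :
    deriv P₁ t₀ = -1 / t₀ ∧ deriv q₁ t₀ = -α₀ / t₀ :=
  leading_coefficients_at_C2_01_general α₀ α₁ α₃ α₅ η t₀ ht₀0 ht₀1 U hUopen ht₀U q₁ q₂ P₁ P₂ hq₁ hq₂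
    hP₁ hP₂ hinit₁ hinit₃ hinit₄ hE₁ hE₃
end

section
/- Let t₀ ∈ ℂ∖{0,1}. Let q₁, q₂, P₁, P₂ be holomorphic functions on a neighborhood of t₀ with (q₁(t₀), q₂(t₀), P₁(t₀), P₂(t₀)) = (0, t₀, 0, 0), which satisfy on that neighborhood equation (E3) of the W₀₁-system together with the denominator-cleared forms of (E1), (E2) and (E4) (each obtained by multiplying both sides by P₁). Then q₁′(t₀) = (α₃+α₅−η)/(t₀−1), q₂′(t₀) = 1 − α₄/2, P₁′(t₀) = 1/(t₀−1), and P₂′(t₀) = −α₃/(t₀(t₀−1)). -/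
/-!
Since `P₁(t₀) = 0`, differentiating a cleared equation `t(t-1) X' P₁ = A P₁ + B` at `t₀` gives
`t₀(t₀-1) X'(t₀) P₁'(t₀) = A(t₀) P₁'(t₀) + B'(t₀)`: only the continuity of `X'` and of `A` enters.
Equation (E3) at `t₀` reads `t₀(t₀-1) P₁'(t₀) = t₀`, and with `P₁'(t₀)` known the differentiated
forms of (E1), (E2), (E4) are linear in `q₁'(t₀)`, `q₂'(t₀)`, `P₂'(t₀)` respectively.
-/

open Filter Topology

theorem ContinuousAt.hasDerivAt_mul_of_eq_zero {𝕜 : Type*} [NontriviallyNormedField 𝕜]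
    {f g : 𝕜 → 𝕜} {g' x : 𝕜} (hf : ContinuousAt f x) (hg : HasDerivAt g g' x) (hg0 : g x = 0) :
    HasDerivAt (fun y => f y * g y) (f x * g') x := by
  rw [hasDerivAt_iff_tendsto_slope] at hg ⊢
  have hslope : slope (fun y => f y * g y) x = fun y => f y * slope g x y := by
    ext y
    simp only [slope_def_field, hg0, mul_zero, sub_zero]
    ring
  rw [hslope]
  exact (hf.mono_left nhdsWithin_le_nhds).mul hg

theorem mul_eq_mul_add_of_eventually_mul_eq_mul_add {𝕜 : Type*} [NontriviallyNormedField 𝕜]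
    {f g a b : 𝕜 → 𝕜} {x g' b' : 𝕜} (h : ∀ᶠ y in 𝓝 x, f y * g y = a y * g y + b y)
    (hf : ContinuousAt f x) (ha : ContinuousAt a x) (hg : HasDerivAt g g' x) (hg0 : g x = 0)
    (hb : HasDerivAt b b' x) :
    f x * g' = a x * g' + b' :=
  (hf.hasDerivAt_mul_of_eq_zero hg hg0).unique <|
    ((ha.hasDerivAt_mul_of_eq_zero hg hg0).add hb).congr_of_eventuallyEq h

theorem leading_coefficients_at_P3_01_general
    (α₀ α₁ α₂ α₃ α₄ α₅ η : ℂ)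
    (t₀ : ℂ) (ht₀0 : t₀ ≠ 0) (ht₀1 : t₀ ≠ 1)
    (U : Set ℂ) (hUopen : IsOpen U) (ht₀U : t₀ ∈ U)
    (q₁ q₂ P₁ P₂ : ℂ → ℂ)
    (hq₁ : DifferentiableOn ℂ q₁ U) (hq₂ : DifferentiableOn ℂ q₂ U)
    (hP₁ : DifferentiableOn ℂ P₁ U) (hP₂ : DifferentiableOn ℂ P₂ U)
    (hinit₁ : q₁ t₀ = 0) (hinit₂ : q₂ t₀ = t₀) (hinit₃ : P₁ t₀ = 0) (hinit₄ : P₂ t₀ = 0)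
    -- (E1), cleared of its denominator `P₁`
    (hE₁ : ∀ t ∈ U, t * (t - 1) * deriv q₁ t * P₁ t =
      ((α₁ + η) * (q₁ t) ^ 2 + α₃ * (q₁ t) * (q₂ t) +
          ((α₀ + α₅ - η) * t - (α₀ + α₁ + η)) * (q₁ t) - α₃ * (q₂ t) - (α₅ - η) * t) *
        P₁ t +
        ((q₁ t - 1) * (q₁ t + q₂ t) * (q₂ t - t) * P₂ t +
          2 * (q₁ t) * (q₁ t - 1) * (q₁ t - t)))
    -- (E2), cleared of its denominator `P₁`
    (hE₂ : ∀ t ∈ U, t * (t - 1) * deriv q₂ t * P₁ t =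
      (α₁ * (q₁ t) * (q₂ t) + (α₃ + η) * (q₂ t) ^ 2 - α₁ * t * (q₁ t) -
          ((α₃ + α₄ + η - 1) * t - (α₄ + α₅ - η - 1)) * (q₂ t) - (α₅ - η) * t) *
        P₁ t +
        (2 * (q₂ t) * (q₂ t - 1) * (q₂ t - t) * P₂ t +
          (q₁ t - 1) * (q₁ t + q₂ t) * (q₂ t - t)))
    -- (E3)
    (hE₃ : ∀ t ∈ U, t * (t - 1) * deriv P₁ t =
      α₁ * η * (P₁ t) ^ 2 +
        (2 * (α₁ + η) * (q₁ t) + α₃ * (q₂ t) + (α₀ + α₅ - η) * t - (α₀ + α₁ + η)) *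
          P₁ t +
        α₁ * (q₂ t - t) * P₁ t * P₂ t +
        (2 * (q₁ t) + q₂ t - 1) * (q₂ t - t) * P₂ t +
        3 * (q₁ t) ^ 2 - 2 * (t + 1) * (q₁ t) + t)
    -- (E4), cleared of its denominator `P₁`
    (hE₄ : ∀ t ∈ U, t * (t - 1) * deriv P₂ t * P₁ t =
      (η * (α₁ * P₂ t - α₃) * P₁ t + α₁ * (q₂ t - t) * (P₂ t) ^ 2 +
          ((α₁ + 2 * η) * (q₁ t) - (α₃ + 2 * η) * (q₂ t) - (α₁ + α₂) * t + α₂ + α₃) *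
            P₂ t -
          α₃ * (q₁ t - 1)) *
        P₁ t +
        ((2 * (q₁ t) * (q₂ t) - 2 * (q₂ t) ^ 2 - 2 * t * (q₁ t) + (t + 1) * (q₂ t)) *
            (P₂ t) ^ 2 +
          (2 * (q₁ t) ^ 2 - 2 * (q₁ t) * (q₂ t) - (t + 1) * (q₁ t) + 2 * (q₂ t)) *
            P₂ t)) :
    deriv q₁ t₀ = (α₃ + α₅ - η) / (t₀ - 1) ∧ deriv q₂ t₀ = 1 - α₄ / 2 ∧
      deriv P₁ t₀ = 1 / (t₀ - 1) ∧ deriv P₂ t₀ = -α₃ / (t₀ * (t₀ - 1)) := by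
  have hU : U ∈ 𝓝 t₀ := hUopen.mem_nhds ht₀U
  have hdq₁ := hq₁.differentiableAt hU
  have hdq₂ := hq₂.differentiableAt hU
  have hdP₁ := hP₁.differentiableAt hU
  have hdP₂ := hP₂.differentiableAt hU
  have hcq₁ := (hq₁.deriv hUopen).continuousOn.continuousAt hU
  have hcq₂ := (hq₂.deriv hUopen).continuousOn.continuousAt hU
  have hcP₂ := (hP₂.deriv hUopen).continuousOn.continuousAt hU
  have ht₀1' : t₀ - 1 ≠ 0 := sub_ne_zero.mpr ht₀1
  have hP₁' : deriv P₁ t₀ = 1 / (t₀ - 1) := by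
    have h := hE₃ t₀ ht₀U
    rw [hinit₁, hinit₂, hinit₃, hinit₄] at h
    rw [eq_div_iff ht₀1']
    exact mul_left_cancel₀ ht₀0 (by linear_combination h)
  have e₁ := mul_eq_mul_add_of_eventually_mul_eq_mul_add (eventually_of_mem hU hE₁) (by fun_prop)
    (DifferentiableAt.continuousAt (by fun_prop)) hdP₁.hasDerivAt hinit₃
    (DifferentiableAt.hasDerivAt (by fun_prop))
  have e₂ := mul_eq_mul_add_of_eventually_mul_eq_mul_add (eventually_of_mem hU hE₂) (by fun_prop)
    (DifferentiableAt.continuousAt (by fun_prop)) hdP₁.hasDerivAt hinit₃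
    (DifferentiableAt.hasDerivAt (by fun_prop))
  have e₄ := mul_eq_mul_add_of_eventually_mul_eq_mul_add (eventually_of_mem hU hE₄) (by fun_prop)
    (DifferentiableAt.continuousAt (by fun_prop)) hdP₁.hasDerivAt hinit₃
    (DifferentiableAt.hasDerivAt (by fun_prop))
  simp (disch := fun_prop) only [deriv_fun_add, deriv_fun_mul, deriv_fun_sub, deriv_fun_pow,
    deriv_const, deriv_id'', hinit₁, hinit₂, hinit₃, hinit₄, hP₁'] at e₁ e₂ e₄
  field_simp at e₁ e₂ e₄
  refine ⟨?_, ?_, hP₁', ?_⟩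
  · rw [eq_div_iff ht₀1']
    exact mul_left_cancel₀ ht₀0 (by linear_combination -e₁)
  · exact mul_left_cancel₀ (mul_ne_zero ht₀0 ht₀1') (by linear_combination e₂ / 2)
  · rw [eq_div_iff (mul_ne_zero ht₀0 ht₀1')]
    linear_combination -e₄

/-- A holomorphic solution of the `W₀₁`-system (in the denominator-cleared form)
through the point `(0, t₀, 0, 0)` of the accessible singularity `P₃^{(01)}`
satisfies `q₁′(t₀) = (α₃+α₅−η)/(t₀−1)`, `q₂′(t₀) = 1 − α₄/2`,
`P₁′(t₀) = 1/(t₀−1)` and `P₂′(t₀) = −α₃/(t₀(t₀−1))`. -/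
theorem leading_coefficients_at_P3_01
    (α₀ α₁ α₂ α₃ α₄ α₅ η : ℂ) (hsum : α₀ + α₁ + α₂ + α₃ + α₄ + α₅ = 1)
    (t₀ : ℂ) (ht₀0 : t₀ ≠ 0) (ht₀1 : t₀ ≠ 1)
    (U : Set ℂ) (hUopen : IsOpen U) (ht₀U : t₀ ∈ U)
    (q₁ q₂ P₁ P₂ : ℂ → ℂ)
    (hq₁ : DifferentiableOn ℂ q₁ U) (hq₂ : DifferentiableOn ℂ q₂ U)
    (hP₁ : DifferentiableOn ℂ P₁ U) (hP₂ : DifferentiableOn ℂ P₂ U)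
    (hinit₁ : q₁ t₀ = 0) (hinit₂ : q₂ t₀ = t₀) (hinit₃ : P₁ t₀ = 0) (hinit₄ : P₂ t₀ = 0)
    -- (E1), cleared of its denominator `P₁`
    (hE₁ : ∀ t ∈ U, t * (t - 1) * deriv q₁ t * P₁ t =
      ((α₁ + η) * (q₁ t) ^ 2 + α₃ * (q₁ t) * (q₂ t) +
          ((α₀ + α₅ - η) * t - (α₀ + α₁ + η)) * (q₁ t) - α₃ * (q₂ t) - (α₅ - η) * t) *
        P₁ t +
        ((q₁ t - 1) * (q₁ t + q₂ t) * (q₂ t - t) * P₂ t +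
          2 * (q₁ t) * (q₁ t - 1) * (q₁ t - t)))
    -- (E2), cleared of its denominator `P₁`
    (hE₂ : ∀ t ∈ U, t * (t - 1) * deriv q₂ t * P₁ t =
      (α₁ * (q₁ t) * (q₂ t) + (α₃ + η) * (q₂ t) ^ 2 - α₁ * t * (q₁ t) -
          ((α₃ + α₄ + η - 1) * t - (α₄ + α₅ - η - 1)) * (q₂ t) - (α₅ - η) * t) *
        P₁ t +
        (2 * (q₂ t) * (q₂ t - 1) * (q₂ t - t) * P₂ t +
          (q₁ t - 1) * (q₁ t + q₂ t) * (q₂ t - t)))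
    -- (E3)
    (hE₃ : ∀ t ∈ U, t * (t - 1) * deriv P₁ t =
      α₁ * η * (P₁ t) ^ 2 +
        (2 * (α₁ + η) * (q₁ t) + α₃ * (q₂ t) + (α₀ + α₅ - η) * t - (α₀ + α₁ + η)) *
          P₁ t +
        α₁ * (q₂ t - t) * P₁ t * P₂ t +
        (2 * (q₁ t) + q₂ t - 1) * (q₂ t - t) * P₂ t +
        3 * (q₁ t) ^ 2 - 2 * (t + 1) * (q₁ t) + t)
    -- (E4), cleared of its denominator `P₁`
    (hE₄ : ∀ t ∈ U, t * (t - 1) * deriv P₂ t * P₁ t =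
      (η * (α₁ * P₂ t - α₃) * P₁ t + α₁ * (q₂ t - t) * (P₂ t) ^ 2 +
          ((α₁ + 2 * η) * (q₁ t) - (α₃ + 2 * η) * (q₂ t) - (α₁ + α₂) * t + α₂ + α₃) *
            P₂ t -
          α₃ * (q₁ t - 1)) *
        P₁ t +
        ((2 * (q₁ t) * (q₂ t) - 2 * (q₂ t) ^ 2 - 2 * t * (q₁ t) + (t + 1) * (q₂ t)) *
            (P₂ t) ^ 2 +
          (2 * (q₁ t) ^ 2 - 2 * (q₁ t) * (q₂ t) - (t + 1) * (q₁ t) + 2 * (q₂ t)) *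
            P₂ t)) :
    deriv q₁ t₀ = (α₃ + α₅ - η) / (t₀ - 1) ∧ deriv q₂ t₀ = 1 - α₄ / 2 ∧
      deriv P₁ t₀ = 1 / (t₀ - 1) ∧ deriv P₂ t₀ = -α₃ / (t₀ * (t₀ - 1)) :=
  leading_coefficients_at_P3_01_general α₀ α₁ α₂ α₃ α₄ α₅ η t₀ ht₀0 ht₀1 U hUopen ht₀U q₁ q₂ P₁ P₂
    hq₁ hq₂ hP₁ hP₂ hinit₁ hinit₂ hinit₃ hinit₄ hE₁ hE₂ hE₃ hE₄
end

section
/- There exists a polynomial P in four variables with complex coefficients such that for all (x,y,z,w) ∈ ℂ⁴ with z ≠ 0, H(t; 1+(α₀−xz)z, y, 1/z, w) = P(x,y,z,w). In other words, the FST Hamiltonian H is a polynomial function of the coordinates (x₂^{[01]}, y₂^{[01]}, z₂^{[01]}, w₂^{[01]}) = (−((q₁−1)p₁−α₀)p₁, q₂, 1/p₁, p₂), whose inverse is (q₁,q₂,p₁,p₂) = (1+(α₀−xz)z, y, 1/z, w). -/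
/-!
Put `s = (q₁ - 1) p₁`, so that `q₁ = 1 + s z` and `s = α₀ - x z` in the new coordinates.
The only non-polynomial terms of `H` are the double pole `q₁ (q₁ - 1) (q₁ - t) p₁²` and the
simple pole `α₀ q₁ (q₁ - t) p₁` of the first `H_VI`; together they equal
`q₁ (q₁ - t) p₁ (s - α₀) = -x q₁ (q₁ - t)`. Every other occurrence of `p₁` comes with a factor
`q₁ - 1`, i.e. through `s`. Hence `t (t - 1) H` is a polynomial expression in `x, y, z, w`,
and dividing by the constant `t (t - 1)` keeps it polynomial.
-/

section Numerators

variable {R : Type*} [CommRing R]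

def hviNum (t a b c d q p : R) : R :=
  q * (q - 1) * (q - t) * p ^ 2 -
    (a * (q - 1) * (q - t) + b * q * (q - t) + (c - 1) * q * (q - 1)) * p + d * q

/-- `hviNum` at `q = 1 + (b - x z) z`, `p = 1 / z`, with its pole at `z = 0` cancelled. -/
def hviNumChart (t a b c d x z : R) : R :=
  let s := b - x * z
  let q := 1 + s * z
  d * q - x * q * (q - t) - a * s * (q - t) - (c - 1) * q * s

/-- `t (t - 1) H` at `(q₁, q₂, p₁, p₂) = (1 + (α₀ - x z) z, y, 1 / z, w)`. -/
def hfstNumChart (α₀ α₁ α₂ α₃ α₄ α₅ η t x y z w : R) : R :=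
  let s := α₀ - x * z
  hviNumChart t (α₃ + α₅ - η) α₀ (α₂ + α₄) (α₁ * η) x z +
    hviNum t (α₁ + α₅ - η) (α₀ + α₂) α₄ (α₃ * η) y w +
    (y - t) * s * ((1 + s * z + α₁ * z) * w + y * w + α₃)

theorem map_hfstNumChart {S : Type*} [CommRing S] (f : R →+* S)
    (α₀ α₁ α₂ α₃ α₄ α₅ η t x y z w : R) :
    f (hfstNumChart α₀ α₁ α₂ α₃ α₄ α₅ η t x y z w) =
      hfstNumChart (f α₀) (f α₁) (f α₂) (f α₃) (f α₄) (f α₅) (f η) (f t)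
        (f x) (f y) (f z) (f w) := by
  simp [hfstNumChart, hviNumChart, hviNum]

end Numerators

theorem hviNum_chart {K : Type*} [Field K] (t a b c d x : K) {z : K} (hz : z ≠ 0) :
    hviNum t a b c d (1 + (b - x * z) * z) (1 / z) = hviNumChart t a b c d x z := by
  simp only [hviNum, hviNumChart]
  field_simp
  ring

theorem Hvi_eq_hviNum_div (t a b c d q p : ℂ) :
    Hvi t a b c d q p = hviNum t a b c d q p / (t * (t - 1)) :=
  rfl

theorem HFST_chart (α₀ α₁ α₂ α₃ α₄ α₅ η t x y : ℂ) {z : ℂ} (hz : z ≠ 0) (w : ℂ) :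
    HFST α₀ α₁ α₂ α₃ α₄ α₅ η t (1 + (α₀ - x * z) * z) y (1 / z) w =
      hfstNumChart α₀ α₁ α₂ α₃ α₄ α₅ η t x y z w / (t * (t - 1)) := by
  rw [HFST, Hvi_eq_hviNum_div, Hvi_eq_hviNum_div, hviNum_chart _ _ _ _ _ _ hz, ← add_div,
    ← add_div, hfstNumChart]
  congr 2
  field_simp
  ring

open MvPolynomial in
theorem HFST_polynomial_in_C2_01_coordinates_general
    (t α₀ α₁ α₂ α₃ α₄ α₅ η : ℂ) :
    ∃ P : MvPolynomial (Fin 4) ℂ, ∀ x y z w : ℂ, z ≠ 0 →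
      HFST α₀ α₁ α₂ α₃ α₄ α₅ η t (1 + (α₀ - x * z) * z) y (1 / z) w =
        MvPolynomial.eval ![x, y, z, w] P := by
  refine ⟨C (t * (t - 1))⁻¹ * hfstNumChart (C α₀) (C α₁) (C α₂) (C α₃) (C α₄) (C α₅) (C η) (C t)
    (X 0) (X 1) (X 2) (X 3), fun x y z w hz => ?_⟩
  rw [HFST_chart _ _ _ _ _ _ _ _ _ _ hz, map_mul, map_hfstNumChart, div_eq_inv_mul]
  simp

/-- The FST Hamiltonian `H` is a polynomial function of the coordinates
`(x₂^{[01]}, y₂^{[01]}, z₂^{[01]}, w₂^{[01]}) = (−((q₁−1)p₁−α₀)p₁, q₂, 1/p₁, p₂)`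
resolving the accessible singularity `C₂^{(01)}`; the inverse change of variables is
`(q₁,q₂,p₁,p₂) = (1+(α₀−xz)z, y, 1/z, w)`. -/
theorem HFST_polynomial_in_C2_01_coordinates
    (t α₀ α₁ α₂ α₃ α₄ α₅ η : ℂ) (ht0 : t ≠ 0) (ht1 : t ≠ 1)
    (hsum : α₀ + α₁ + α₂ + α₃ + α₄ + α₅ = 1) :
    ∃ P : MvPolynomial (Fin 4) ℂ, ∀ x y z w : ℂ, z ≠ 0 →
      HFST α₀ α₁ α₂ α₃ α₄ α₅ η t (1 + (α₀ - x * z) * z) y (1 / z) w =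
        MvPolynomial.eval ![x, y, z, w] P :=
  HFST_polynomial_in_C2_01_coordinates_general t α₀ α₁ α₂ α₃ α₄ α₅ η
end
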